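/- Let H̃ ∈ ℝ^{2K×2N} with 2K ≤ 2N have full row rank, let A ∈ ℝ^{2K×2K} be invertible, and let c ∈ ℝ^{2K}. Among all vectors u ∈ ℝ^{2N} satisfying A(H̃u − c) = Wδ for some δ ⪰ 0 (W a fixed diagonal 0/1 matrix), the vector of minimum Euclidean norm is u* = H̃⁺(c + A⁻¹Wδ*), where H̃⁺ is the Moore–Penrose pseudoinverse of H̃ and δ* minimizes ‖H̃⁺c + H̃⁺A⁻¹Wδ‖² over δ ⪰ 0. -/
import Mathlib


open Matrix

/-- Squared Euclidean norm of a real vector. -/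
def sqn {k : ℕ} (v : Fin k → ℝ) : ℝ := ∑ i, v i ^ 2

lemma sqn_eq_dot {k : ℕ} (v : Fin k → ℝ) : sqn v = v ⬝ᵥ v := by
  simp [sqn, dotProduct, sq]

lemma sqn_nonneg {k : ℕ} (v : Fin k → ℝ) : 0 ≤ sqn v :=
  Finset.sum_nonneg fun i _ => sq_nonneg _

/-- Gram matrix of a full-row-rank matrix is invertible. -/
lemma gram_isUnit {m n : ℕ} (H : Matrix (Fin m) (Fin n) ℝ)
    (hrank : LinearIndependent ℝ fun i : Fin m => (fun j => H i j : Fin n → ℝ)) :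
    IsUnit (H * Hᵀ).det := by
  have hv : Function.Injective H.vecMul := Matrix.vecMul_injective_iff.mpr hrank
  have hinj : Function.Injective (H * Hᵀ).mulVec := by
    intro x y hxy
    have h0 : (H * Hᵀ).mulVec (x - y) = 0 := by
      rw [Matrix.mulVec_sub, hxy, sub_self]
    have h2 := congr_arg (dotProduct (x - y)) h0
    rw [← Matrix.mulVec_mulVec, dotProduct_mulVec, dotProduct_zero,
      Matrix.mulVec_transpose, dotProduct_self_eq_zero] at h2
    have h3 : (x - y) ᵥ* H = 0 ᵥ* H := by rw [Matrix.zero_vecMul]; exact h2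
    have := hv h3
    exact sub_eq_zero.mp this
  exact (Matrix.isUnit_iff_isUnit_det _).mp (Matrix.mulVec_injective_iff_isUnit.mp hinj)

/-- Projection inequality: for `P` symmetric idempotent, `sqn (P v) ≤ sqn v`. -/
lemma proj_sqn_le {m : ℕ} (P : Matrix (Fin m) (Fin m) ℝ)
    (hsymm : Pᵀ = P) (hidem : P * P = P) (v : Fin m → ℝ) :
    sqn (P.mulVec v) ≤ sqn v := by
  have hPv : P.mulVec v = v ᵥ* P := by
    rw [← hsymm, Matrix.mulVec_transpose, hsymm]
  have hcross : (P.mulVec v) ⬝ᵥ (v - P.mulVec v) = 0 := by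
    nth_rewrite 1 [hPv]
    rw [← dotProduct_mulVec, Matrix.mulVec_sub, Matrix.mulVec_mulVec, hidem,
      sub_self, dotProduct_zero]
  have hdecomp : sqn v = sqn (P.mulVec v) + sqn (v - P.mulVec v) := by
    rw [sqn_eq_dot, sqn_eq_dot, sqn_eq_dot]
    have : v = P.mulVec v + (v - P.mulVec v) := by ring
    rw [this]
    rw [add_dotProduct, dotProduct_add, dotProduct_add]
    rw [hcross]
    rw [dotProduct_comm (v - P.mulVec v) (P.mulVec v), hcross]
    ring
  rw [hdecomp]
  linarith [sqn_nonneg (v - P.mulVec v)]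

/-- Reduction of the SINR-constrained power-minimization SLP problem to NNLS:
`u* = H̃⁺(c + A⁻¹Wδ*)` is feasible and has minimum Euclidean norm among all
`u` with `A(H̃u − c) = Wδ` for some `δ ⪰ 0`, where `δ*` solves the NNLS problem. -/
theorem slp_nnls_reduction {K N : ℕ} (hKN : K ≤ N)
    (H : Matrix (Fin (2 * K)) (Fin (2 * N)) ℝ)
    (hrank : LinearIndependent ℝ fun i : Fin (2 * K) => (fun j => H i j : Fin (2 * N) → ℝ))
    (A : Matrix (Fin (2 * K)) (Fin (2 * K)) ℝ) (hA : IsUnit A.det)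
    (c : Fin (2 * K) → ℝ)
    (w : Fin (2 * K) → ℝ) (hw : ∀ i, w i = 0 ∨ w i = 1)
    (δs : Fin (2 * K) → ℝ) (hδs : ∀ i, 0 ≤ δs i)
    (hmin : ∀ δ : Fin (2 * K) → ℝ, (∀ i, 0 ≤ δ i) →
      sqn ((Hᵀ * (H * Hᵀ)⁻¹).mulVec c +
          (Hᵀ * (H * Hᵀ)⁻¹ * A⁻¹ * Matrix.diagonal w).mulVec δs) ≤
        sqn ((Hᵀ * (H * Hᵀ)⁻¹).mulVec c +
          (Hᵀ * (H * Hᵀ)⁻¹ * A⁻¹ * Matrix.diagonal w).mulVec δ)) :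
    (∃ δ : Fin (2 * K) → ℝ, (∀ i, 0 ≤ δ i) ∧
      A.mulVec (H.mulVec ((Hᵀ * (H * Hᵀ)⁻¹).mulVec
          (c + (A⁻¹ * Matrix.diagonal w).mulVec δs)) - c) = (Matrix.diagonal w).mulVec δ) ∧
    ∀ u : Fin (2 * N) → ℝ,
      (∃ δ : Fin (2 * K) → ℝ, (∀ i, 0 ≤ δ i) ∧
        A.mulVec (H.mulVec u - c) = (Matrix.diagonal w).mulVec δ) →
      Real.sqrt (∑ j, ((Hᵀ * (H * Hᵀ)⁻¹).mulVec
          (c + (A⁻¹ * Matrix.diagonal w).mulVec δs)) j ^ 2) ≤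
        Real.sqrt (∑ j, u j ^ 2) := by
  have hG : IsUnit (H * Hᵀ).det := gram_isUnit H hrank
  set Hp : Matrix (Fin (2 * N)) (Fin (2 * K)) ℝ := Hᵀ * (H * Hᵀ)⁻¹ with hHp
  -- H * Hp = 1
  have hHHp : H * Hp = 1 := by
    rw [hHp, ← Matrix.mul_assoc]
    exact Matrix.mul_nonsing_inv _ hG
  -- H applied to the candidate gives back c + A⁻¹Wδs
  have happ : ∀ v : Fin (2 * K) → ℝ, H.mulVec (Hp.mulVec v) = v := by
    intro v
    rw [Matrix.mulVec_mulVec, hHHp, Matrix.one_mulVec]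
  constructor
  · refine ⟨δs, hδs, ?_⟩
    rw [happ]
    rw [add_sub_cancel_left, Matrix.mulVec_mulVec, ← Matrix.mul_assoc,
      Matrix.mul_nonsing_inv _ hA, Matrix.one_mul]
  · intro u ⟨δ, hδ, hfeas⟩
    -- from feasibility: H u = c + (A⁻¹ * W) δ
    have hHu : H.mulVec u = c + (A⁻¹ * Matrix.diagonal w).mulVec δ := by
      have := congr_arg (A⁻¹.mulVec ·) hfeas
      simp only [Matrix.mulVec_mulVec] at this
      rw [Matrix.nonsing_inv_mul _ hA, Matrix.one_mulVec] at this
      exact sub_eq_iff_eq_add'.mp this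
    -- projection matrix
    set P : Matrix (Fin (2 * N)) (Fin (2 * N)) ℝ := Hp * H with hPdef
    have hPsymm : Pᵀ = P := by
      rw [hPdef, hHp, Matrix.transpose_mul, Matrix.transpose_mul,
        Matrix.transpose_nonsing_inv, Matrix.transpose_mul, Matrix.transpose_transpose,
        Matrix.mul_assoc]
    have hPidem : P * P = P := by
      rw [hPdef, Matrix.mul_assoc, ← Matrix.mul_assoc H Hp H, hHHp, Matrix.one_mul]
    -- Hp (H u) = P u
    have hkey : Hp.mulVec (H.mulVec u) = P.mulVec u := by
      rw [Matrix.mulVec_mulVec]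
    -- chain of inequalities on sqn
    have e1 : Hp.mulVec (c + (A⁻¹ * Matrix.diagonal w).mulVec δ) =
        Hp.mulVec c + (Hp * A⁻¹ * Matrix.diagonal w).mulVec δ := by
      simp [Matrix.mulVec_add, Matrix.mulVec_mulVec, Matrix.mul_assoc]
    have e2 : Hp.mulVec (c + (A⁻¹ * Matrix.diagonal w).mulVec δs) =
        Hp.mulVec c + (Hp * A⁻¹ * Matrix.diagonal w).mulVec δs := by
      simp [Matrix.mulVec_add, Matrix.mulVec_mulVec, Matrix.mul_assoc]
    have hineq : sqn (Hp.mulVec (c + (A⁻¹ * Matrix.diagonal w).mulVec δs)) ≤ sqn u := by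
      calc sqn (Hp.mulVec (c + (A⁻¹ * Matrix.diagonal w).mulVec δs))
          = sqn (Hp.mulVec c + (Hp * A⁻¹ * Matrix.diagonal w).mulVec δs) := by rw [e2]
        _ ≤ sqn (Hp.mulVec c + (Hp * A⁻¹ * Matrix.diagonal w).mulVec δ) := hmin δ hδ
        _ = sqn (Hp.mulVec (c + (A⁻¹ * Matrix.diagonal w).mulVec δ)) := by rw [e1]
        _ = sqn (P.mulVec u) := by rw [← hHu, hkey]
        _ ≤ sqn u := proj_sqn_le P hPsymm hPidem u
    simpa [sqn] using Real.sqrt_le_sqrt hineq
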